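/- Let q be a prime power, n ≥ 2, 1 ≤ m < n, F = 𝔽_q((t⁻¹)) and O = 𝔽_q[[t⁻¹]] its valuation ring. Let U(𝔽_q) be the finite subgroup of SL_n(F) of all block matrices fromBlocks(1_m, B, 0, 1_{n−m}) with B an m×(n−m) matrix over 𝔽_q. If g ∈ SL_n(F) is block diagonal of the form fromBlocks(A, 0, 0, D) with all entries of A and D in O, and g normalizes U(𝔽_q), then every entry of g lies in 𝔽_q (the constants); that is, the normalizer of U(𝔽_q) in SL_n(F) meets the Levi subgroup L(O) exactly in L(𝔽_q). (This is part (ii) of the normalizer lemma, in its type A_{n-1} instance.) -/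

import Mathlib

/-!
Conjugating `fromBlocks 1 B 0 1` by `g = fromBlocks A 0 0 D` gives `fromBlocks 1 (A * B * D⁻¹) 0 1`,
so taking for `B` the matrix units shows that every product `A i k * D⁻¹ l j` is a constant.
For a nonzero entry `x` of `A` the matrices `x⁻¹ • A` and `x • D⁻¹` are then constant, and since
`det A = det D⁻¹` their determinants give `x ^ (a + b) = det (x • D⁻¹) / det (x⁻¹ • A)`, a constant.
Now `x` is a power series algebraic over `𝔽_q`, hence constant: otherwise `x - x(0)` would be a
nonzero algebraic element of the domain `𝔽_q[[X]]`, hence a unit, though its constant term is `0`.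
So `A = x • (x⁻¹ • A)` and `D⁻¹` are constant, and so is `D`.
-/

noncomputable section
open Matrix

variable (Fq : Type) [Field Fq] [Fintype Fq]

/-- `F = 𝔽_q((t⁻¹))`, realized as the field of formal Laurent series over `𝔽_q`
with uniformizer `X = t⁻¹`. -/
abbrev F := LaurentSeries Fq

/-- The inclusion `O = 𝔽_q[[X]] → F`. -/
def ofPS : PowerSeries Fq →+* F Fq := HahnSeries.ofPowerSeries ℤ Fq

/-- `U(𝔽_q)`: the block upper unipotent matrices with constant entries. -/
def Uconst (a b : ℕ) : Set (SpecialLinearGroup (Fin a ⊕ Fin b) (F Fq)) :=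
  {u | ∃ B : Matrix (Fin a) (Fin b) Fq,
    (u : Matrix (Fin a ⊕ Fin b) (Fin a ⊕ Fin b) (F Fq)) =
      Matrix.fromBlocks 1 (B.map (HahnSeries.C : Fq →+* F Fq)) 0 1}

theorem PowerSeries.exists_eq_C_of_isIntegral {K : Type*} [Field K] {f : PowerSeries K}
    (hf : IsIntegral K f) : ∃ c : K, f = PowerSeries.C c := by
  refine ⟨PowerSeries.constantCoeff f, by_contra fun hne => ?_⟩
  have hunit := (hf.sub isIntegral_algebraMap).isUnit (sub_ne_zero.mpr hne)
  simp [PowerSeries.isUnit_iff_constantCoeff] at hunit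

theorem PowerSeries.isIntegral_of_pow_eq_C {K : Type*} [Field K] {f : PowerSeries K} {n : ℕ}
    (hn : n ≠ 0) {μ : K} (h : f ^ n = PowerSeries.C μ) : IsIntegral K f :=
  ⟨Polynomial.X ^ n - Polynomial.C μ, Polynomial.monic_X_pow_sub_C μ hn, by simp [h]⟩

theorem LaurentSeries.mem_range_C_of_pow_mem_range_C {K : Type*} [Field K] {x : LaurentSeries K}
    (hx : x ∈ Set.range (HahnSeries.ofPowerSeries ℤ K)) {n : ℕ} (hn : n ≠ 0)
    (hpow : x ^ n ∈ Set.range (HahnSeries.C : K →+* LaurentSeries K)) :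
    x ∈ Set.range (HahnSeries.C : K →+* LaurentSeries K) := by
  obtain ⟨f, rfl⟩ := hx
  obtain ⟨μ, hμ⟩ := hpow
  have hfμ : f ^ n = PowerSeries.C μ := HahnSeries.ofPowerSeries_injective <| by
    rw [map_pow (HahnSeries.ofPowerSeries ℤ K), HahnSeries.ofPowerSeries_C, hμ]
  obtain ⟨c, rfl⟩ :=
    PowerSeries.exists_eq_C_of_isIntegral (PowerSeries.isIntegral_of_pow_eq_C hn hfμ)
  exact ⟨c, (HahnSeries.ofPowerSeries_C c).symm⟩

theorem Matrix.mul_single_one_mul_apply {α : Type*} [CommSemiring α] {l m n o : Type*}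
    [Fintype m] [Fintype n] [DecidableEq m] [DecidableEq n]
    (A : Matrix l m α) (E : Matrix n o α) (i : l) (k : m) (k' : n) (j : o) :
    (A * single k k' (1 : α) * E) i j = A i k * E k' j := by
  simp [mul_apply, single_apply, ite_and]

theorem Matrix.exists_ne_zero_of_det_ne_zero {R : Type*} [CommRing R] {n : Type*} [Fintype n]
    [DecidableEq n] [Nonempty n] {M : Matrix n n R} (hM : M.det ≠ 0) : ∃ i j, M i j ≠ 0 := by
  by_contra! h
  exact hM (by rw [show M = 0 from Matrix.ext h, det_zero])

section SubfieldEntries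

variable {L : Type*} [Field L] (S : Subfield L) {n : Type*} [Fintype n] [DecidableEq n]

theorem Matrix.det_mem_of_forall_mem {M : Matrix n n L} (h : ∀ i j, M i j ∈ S) :
    M.det ∈ S := by
  have hM : M = S.subtype.mapMatrix (Matrix.of fun i j => (⟨M i j, h i j⟩ : S)) := rfl
  rw [hM, ← RingHom.map_det]
  exact SetLike.coe_mem _

theorem Matrix.inv_mem_of_forall_mem {M : Matrix n n L} (h : ∀ i j, M i j ∈ S) (i j : n) :
    M⁻¹ i j ∈ S := by
  rw [inv_def, smul_apply, smul_eq_mul, Ring.inverse_eq_inv', adjugate_apply]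
  refine S.mul_mem (S.inv_mem (det_mem_of_forall_mem S h)) (det_mem_of_forall_mem S ?_)
  intro k l
  rw [updateRow_apply]
  split_ifs
  · rw [Pi.single_apply]; split_ifs <;> simp
  · exact h k l

theorem Subfield.div_mem_of_mul_mem {x y z : L} (hx : x * z ∈ S) (hy : y * z ∈ S)
    (hz : z ≠ 0) : x / y ∈ S := by
  simpa [mul_div_mul_right _ _ hz] using S.div_mem hx hy

variable [Nonempty n] {E : Matrix n n L}

theorem Matrix.forall_mem_of_mul_mem_of_mem {ι κ : Type*} {A : Matrix ι κ L}
    (hAE : ∀ i k l j, A i k * E l j ∈ S) (hE : E.det ≠ 0) {i₀ : ι} {k₀ : κ} (hx : A i₀ k₀ ≠ 0)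
    (hxS : A i₀ k₀ ∈ S) :
    (∀ i k, A i k ∈ S) ∧ ∀ l j, E l j ∈ S := by
  have hES : ∀ l j, E l j ∈ S := fun l j => by simpa [hx] using S.div_mem (hAE i₀ k₀ l j) hxS
  obtain ⟨l₀, j₀, he⟩ := exists_ne_zero_of_det_ne_zero hE
  exact ⟨fun i k => by simpa [he] using S.div_mem (hAE i k l₀ j₀) (hES l₀ j₀), hES⟩

theorem Matrix.pow_card_add_card_mem_of_mul_mem {m : Type*} [Fintype m] [DecidableEq m]
    {A : Matrix m m L} (hAE : ∀ i k l j, A i k * E l j ∈ S) (hdet : A.det = E.det)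
    (hA : A.det ≠ 0) (i₀ k₀ : m) : A i₀ k₀ ^ (Fintype.card m + Fintype.card n) ∈ S := by
  set x := A i₀ k₀
  obtain ⟨l₀, j₀, he⟩ := exists_ne_zero_of_det_ne_zero (hdet ▸ hA)
  have hA' : (x⁻¹ • A).det ∈ S := det_mem_of_forall_mem S fun i k => by
    simpa [div_eq_inv_mul] using S.div_mem_of_mul_mem (hAE i k l₀ j₀) (hAE i₀ k₀ l₀ j₀) he
  have hE' : (x • E).det ∈ S :=
    det_mem_of_forall_mem S fun l j => by simpa using hAE i₀ k₀ l j
  have hpow : x ^ (Fintype.card m + Fintype.card n) = (x • E).det / (x⁻¹ • A).det := by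
    rw [det_smul, det_smul, ← hdet, inv_pow, mul_div_mul_right _ _ hA, div_inv_eq_mul, pow_add,
      mul_comm]
  exact hpow ▸ S.div_mem hE' hA'

end SubfieldEntries

theorem mul_inv_mem_fieldRange_of_conj_mem_Uconst {K : Type} [Field K] {a b : ℕ}
    {g : SpecialLinearGroup (Fin a ⊕ Fin b) (F K)} {A : Matrix (Fin a) (Fin a) (F K)}
    {D : Matrix (Fin b) (Fin b) (F K)}
    (hgAD : (g : Matrix (Fin a ⊕ Fin b) (Fin a ⊕ Fin b) (F K)) = fromBlocks A 0 0 D)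
    (hD : IsUnit D.det) (hg : ∀ u ∈ Uconst K a b, g * u * g⁻¹ ∈ Uconst K a b)
    (i k : Fin a) (l j : Fin b) :
    A i k * D⁻¹ l j ∈ (HahnSeries.C : K →+* F K).fieldRange := by
  set C : K →+* F K := HahnSeries.C
  have hU : (fromBlocks 1 ((single k l (1 : K)).map C) 0 1).det = 1 := by simp
  set u : SpecialLinearGroup (Fin a ⊕ Fin b) (F K) := ⟨_, hU⟩
  obtain ⟨B', hB'⟩ := hg u ⟨_, rfl⟩
  have hcomm : (g : Matrix (Fin a ⊕ Fin b) (Fin a ⊕ Fin b) (F K)) * u =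
      ((g * u * g⁻¹ : SpecialLinearGroup (Fin a ⊕ Fin b) (F K)) :
        Matrix (Fin a ⊕ Fin b) (Fin a ⊕ Fin b) (F K)) * g := by
    rw [← Matrix.SpecialLinearGroup.coe_mul, ← Matrix.SpecialLinearGroup.coe_mul,
      inv_mul_cancel_right]
  rw [hB', hgAD, Matrix.SpecialLinearGroup.coe_mk, fromBlocks_multiply, fromBlocks_multiply]
    at hcomm
  have hAD : A * single k l (1 : F K) = B'.map C * D := by
    simpa [map_single] using congrArg toBlocks₁₂ hcomm
  have hconj : A * single k l (1 : F K) * D⁻¹ = B'.map C := by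
    rw [hAD, Matrix.mul_assoc, mul_nonsing_inv _ hD, Matrix.mul_one]
  rw [← mul_single_one_mul_apply, hconj]
  exact RingHom.mem_fieldRange_self _ _

theorem normalizer_inter_Levi_integral_eq_const
    (a b : ℕ) (ha : 1 ≤ a) (hb : 1 ≤ b)
    (g : SpecialLinearGroup (Fin a ⊕ Fin b) (F Fq))
    (A : Matrix (Fin a) (Fin a) (F Fq)) (D : Matrix (Fin b) (Fin b) (F Fq))
    (hA : ∀ i j, A i j ∈ Set.range (ofPS Fq))
    (hgAD : (g : Matrix (Fin a ⊕ Fin b) (Fin a ⊕ Fin b) (F Fq)) = Matrix.fromBlocks A 0 0 D)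
    (hg : (fun u : SpecialLinearGroup (Fin a ⊕ Fin b) (F Fq) => g * u * g⁻¹) '' Uconst Fq a b
      = Uconst Fq a b) :
    ∀ i j, (g : Matrix (Fin a ⊕ Fin b) (Fin a ⊕ Fin b) (F Fq)) i j ∈
      Set.range ((HahnSeries.C : Fq →+* F Fq)) := by
  have : Nonempty (Fin a) := ⟨⟨0, ha⟩⟩
  have : Nonempty (Fin b) := ⟨⟨0, hb⟩⟩
  set S := (HahnSeries.C : Fq →+* F Fq).fieldRange
  have hdet : A.det * D.det = 1 := by simpa [hgAD, det_fromBlocks_zero₂₁] using g.2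
  have hDunit : IsUnit D.det := IsUnit.of_mul_eq_one_right _ hdet
  have hdet_inv : A.det = D⁻¹.det := by
    rw [det_nonsing_inv, Ring.inverse_eq_inv', eq_inv_of_mul_eq_one_left hdet]
  have hA0 : A.det ≠ 0 := left_ne_zero_of_mul_eq_one hdet
  have hprod : ∀ i k l j, A i k * D⁻¹ l j ∈ S :=
    mul_inv_mem_fieldRange_of_conj_mem_Uconst hgAD hDunit fun u hu => hg ▸ ⟨u, hu, rfl⟩
  obtain ⟨i₀, k₀, hx⟩ := exists_ne_zero_of_det_ne_zero hA0
  have hxS : A i₀ k₀ ∈ S := by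
    have hpow := pow_card_add_card_mem_of_mul_mem S hprod hdet_inv hA0 i₀ k₀
    rw [Fintype.card_fin, Fintype.card_fin, ← SetLike.mem_coe, RingHom.coe_fieldRange] at hpow
    rw [← SetLike.mem_coe, RingHom.coe_fieldRange]
    exact LaurentSeries.mem_range_C_of_pow_mem_range_C (hA i₀ k₀) (by omega) hpow
  obtain ⟨hAS, hDinvS⟩ := forall_mem_of_mul_mem_of_mem S hprod (hdet_inv ▸ hA0) hx hxS
  have hDS : ∀ l j, D l j ∈ S := by
    simpa [nonsing_inv_nonsing_inv _ hDunit] using inv_mem_of_forall_mem S hDinvS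
  rw [← RingHom.coe_fieldRange, hgAD]
  rintro (i | i) (j | j)
  exacts [hAS i j, S.zero_mem, S.zero_mem, hDS i j]
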